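/- Let G be a semigroup and let I ⊆ G be a two-sided ideal (for all a ∈ I and g ∈ G, both a*g ∈ I and g*a ∈ I). Let 𝒯 be a partition of G \ I into nonempty finite blocks such that for all blocks X, Y ∈ 𝒯 and every block C ∈ 𝒯, the function sending c ∈ C to the number of pairs (x, y) ∈ X × Y with x*y = c is constant on C (this condition says precisely that 𝒯 together with the class {I} is a Schur ring over the Rees quotient G/I). Then the partition of G consisting of the blocks of 𝒯 together with the singletons {a} for a ∈ I is a Schur ring over G. -/

import Mathlib

open scoped Pointwise

/-- The simple quantity `[X] = ∑_{x ∈ X} x` in the semigroup algebra `MonoidAlgebra ℚ G`. -/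
noncomputable def simpleQty {G : Type*} [Mul G] (X : Finset G) : MonoidAlgebra ℚ G :=
  ∑ x ∈ X, MonoidAlgebra.single x (1 : ℚ)

/-- A partition of `G` into nonempty finite blocks. -/
def IsPartition {G : Type*} (S : Set (Set G)) : Prop :=
  (∀ X ∈ S, X.Nonempty ∧ X.Finite) ∧ ∀ x : G, ∃! X, X ∈ S ∧ x ∈ X

/-- The ℚ-linear span of the simple quantities of the blocks of `S`. -/
noncomputable def schurSpan {G : Type*} [Mul G] (S : Set (Set G)) :
    Submodule ℚ (MonoidAlgebra ℚ G) :=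
  Submodule.span ℚ { z | ∃ X ∈ S, ∃ hX : X.Finite, z = simpleQty hX.toFinset }

/-- A Schur ring over the semigroup `G`. -/
def IsSchurRing {G : Type*} [Semigroup G] (S : Set (Set G)) : Prop :=
  IsPartition S ∧ ∀ X ∈ S, ∀ Y ∈ S, ∀ (hX : X.Finite) (hY : Y.Finite),
    simpleQty hX.toFinset * simpleQty hY.toFinset ∈ schurSpan S

/-- `A` is an `S`-subset: a union of blocks of `S`. -/
def IsSUnion {G : Type*} (S : Set (Set G)) (A : Set G) : Prop :=
  ∀ X ∈ S, X ⊆ A ∨ X ∩ A = ∅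

/-- A partition of the subset `A` of `G` into nonempty finite blocks. -/
def IsPartitionOn {G : Type*} (A : Set G) (T : Set (Set G)) : Prop :=
  (∀ X ∈ T, X.Nonempty ∧ X.Finite ∧ X ⊆ A) ∧ ∀ a ∈ A, ∃! X, X ∈ T ∧ a ∈ X

open scoped Classical in
theorem simpleQty_apply {G : Type*} [Mul G] (X : Finset G) (c : G) :
    (simpleQty X).coeff c = if c ∈ X then 1 else 0 := by
  induction X using Finset.induction with
  | empty => simp [simpleQty]
  | insert _ _ h ih =>
    rw [simpleQty, Finset.sum_insert h]
    rw [simpleQty] at ih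
    rw [MonoidAlgebra.coeff_add, Finsupp.add_apply, ih, MonoidAlgebra.coeff_single, Finsupp.single_apply]
    split_ifs <;> simp_all

open scoped Classical in
theorem mul_coeff {G : Type*} [Semigroup G] (X Y : Finset G) (c : G) :
    (simpleQty X * simpleQty Y).coeff c
      = ((X ×ˢ Y).filter (fun p => p.1 * p.2 = c)).card := by
  rw [simpleQty, simpleQty, Finset.sum_mul_sum]
  simp only [MonoidAlgebra.single_mul_single, one_mul]
  rw [← Finset.sum_product']
  rw [MonoidAlgebra.coeff_sum, Finset.sum_apply']
  simp only [MonoidAlgebra.coeff_single, Finsupp.single_apply]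
  rw [Finset.sum_boole]

open scoped Classical in
theorem ncard_pairs {G : Type*} [Semigroup G] (X Y : Finset G) (c : G) :
    {p : G × G | p.1 ∈ (X : Set G) ∧ p.2 ∈ (Y : Set G) ∧ p.1 * p.2 = c}.ncard
      = ((X ×ˢ Y).filter (fun p => p.1 * p.2 = c)).card := by
  rw [← Set.ncard_coe_finset]
  congr 1
  ext p
  simp [and_assoc]

theorem span_of_blockConst {G : Type*} [Semigroup G] (I : Set G)
    (T : Set (Set G)) (hT : IsPartitionOn Iᶜ T)
    (f : MonoidAlgebra ℚ G)
    (hconst : ∀ C ∈ T, ∀ c ∈ C, ∀ c' ∈ C, f.coeff c = f.coeff c') :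
    f ∈ schurSpan (T ∪ { B : Set G | ∃ a ∈ I, B = {a} }) := by
  classical
  set S := T ∪ { B : Set G | ∃ a ∈ I, B = {a} } with hS
  generalize hn : (Finsupp.support f.coeff).card = n
  induction n using Nat.strong_induction_on generalizing f with
  | _ n ih =>
    rcases eq_or_ne f 0 with rfl | hf0
    · exact Submodule.zero_mem _
    obtain ⟨a, ha⟩ : (Finsupp.support f.coeff).Nonempty :=
      Finsupp.support_nonempty_iff.mpr (mt MonoidAlgebra.coeff_eq_zero.mp hf0)
    have hfa : f.coeff a ≠ 0 := Finsupp.mem_support_iff.mp ha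
    by_cases haI : a ∈ I
    · -- subtract the singleton part
      have hsingle : MonoidAlgebra.single a (1 : ℚ) ∈ schurSpan S := by
        apply Submodule.subset_span
        refine ⟨{a}, Or.inr ⟨a, haI, rfl⟩, Set.finite_singleton a, ?_⟩
        simp [simpleQty]
      set g : MonoidAlgebra ℚ G := f - f.coeff a • MonoidAlgebra.single a 1 with hgdef
      have hg_apply : ∀ c, g.coeff c = if c = a then 0 else f.coeff c := by
        intro c
        rw [hgdef, MonoidAlgebra.coeff_sub, Finsupp.sub_apply, MonoidAlgebra.coeff_smul, Finsupp.smul_apply, MonoidAlgebra.coeff_single, Finsupp.single_apply]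
        by_cases h : c = a
        · subst h; simp
        · simp [Ne.symm h, h]
      have hgsupp : Finsupp.support g.coeff = (Finsupp.support f.coeff).erase a := by
        ext c
        rw [Finsupp.mem_support_iff, Finset.mem_erase, Finsupp.mem_support_iff, hg_apply]
        by_cases h : c = a <;> simp [h]
      have hglt : (Finsupp.support g.coeff).card < n := by
        rw [hgsupp, ← hn]
        exact Finset.card_erase_lt_of_mem ha
      have hgconst : ∀ C ∈ T, ∀ c ∈ C, ∀ c' ∈ C, g.coeff c = g.coeff c' := by
        intro C hC c hc c' hc'
        have h1 : c ≠ a := fun h => ((hT.1 C hC).2.2 hc) (h ▸ haI)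
        have h2 : c' ≠ a := fun h => ((hT.1 C hC).2.2 hc') (h ▸ haI)
        rw [hg_apply, hg_apply, if_neg h1, if_neg h2]
        exact hconst C hC c hc c' hc'
      have hg : g ∈ schurSpan S := ih _ hglt g hgconst rfl
      have : f = g + f.coeff a • MonoidAlgebra.single a 1 := by rw [hgdef]; abel
      rw [this]
      exact Submodule.add_mem _ hg (Submodule.smul_mem _ _ hsingle)
    · -- a lies in a block C of T
      obtain ⟨C, ⟨hCT, haC⟩, huniq⟩ := hT.2 a haI
      have hCfin : C.Finite := (hT.1 C hCT).2.1
      have hCval : simpleQty hCfin.toFinset ∈ schurSpan S :=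
        Submodule.subset_span ⟨C, Or.inl hCT, hCfin, rfl⟩
      have hfC : ∀ c ∈ C, f.coeff c = f.coeff a := fun c hc => hconst C hCT c hc a haC
      set g : MonoidAlgebra ℚ G := f - f.coeff a • simpleQty hCfin.toFinset with hgdef
      have hg_apply : ∀ c, g.coeff c = if c ∈ C then 0 else f.coeff c := by
        intro c
        rw [hgdef, MonoidAlgebra.coeff_sub, Finsupp.sub_apply, MonoidAlgebra.coeff_smul, Finsupp.smul_apply, simpleQty_apply]
        by_cases h : c ∈ C
        · simp [h, hfC c h]
        · simp [h]
      have hgsupp : Finsupp.support g.coeff = (Finsupp.support f.coeff) \ hCfin.toFinset := by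
        ext c
        rw [Finsupp.mem_support_iff, Finset.mem_sdiff, Finsupp.mem_support_iff, hg_apply]
        by_cases h : c ∈ C <;> simp [h]
      have hglt : (Finsupp.support g.coeff).card < n := by
        rw [hgsupp, ← hn]
        apply Finset.card_lt_card
        rw [Finset.ssubset_iff_of_subset (Finset.sdiff_subset)]
        exact ⟨a, ha, by simp [haC]⟩
      have hgconst : ∀ D ∈ T, ∀ c ∈ D, ∀ c' ∈ D, g.coeff c = g.coeff c' := by
        intro D hD c hc c' hc'
        by_cases hDC : D = C
        · subst hDC
          rw [hg_apply, hg_apply, if_pos hc, if_pos hc']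
        · have h1 : c ∉ C := fun h =>
            hDC ((hT.2 c ((hT.1 D hD).2.2 hc)).unique ⟨hD, hc⟩ ⟨hCT, h⟩)
          have h2 : c' ∉ C := fun h =>
            hDC ((hT.2 c' ((hT.1 D hD).2.2 hc')).unique ⟨hD, hc'⟩ ⟨hCT, h⟩)
          rw [hg_apply, hg_apply, if_neg h1, if_neg h2]
          exact hconst D hD c hc c' hc'
      have hg : g ∈ schurSpan S := ih _ hglt g hgconst rfl
      have : f = g + f.coeff a • simpleQty hCfin.toFinset := by rw [hgdef]; abel
      rw [this]
      exact Submodule.add_mem _ hg (Submodule.smul_mem _ _ hCval)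

/-- ideal extension of Schur rings. If `I` is a two-sided ideal of `G` and
`T` is a partition of `G \ I` such that for all blocks `X, Y, C ∈ T` the number of
factorizations `c = x*y` with `x ∈ X`, `y ∈ Y` is constant for `c ∈ C` (i.e. `T ∪ {I}`
is a Schur ring over the Rees quotient `G/I`), then `T` together with the singletons of
elements of `I` is a Schur ring over `G`. -/
theorem rees_extension_schur {G : Type*} [Semigroup G] (I : Set G)
    (hI : ∀ a ∈ I, ∀ g : G, a * g ∈ I ∧ g * a ∈ I)
    (T : Set (Set G)) (hT : IsPartitionOn Iᶜ T)
    (hmult : ∀ X ∈ T, ∀ Y ∈ T, ∀ C ∈ T, ∀ c ∈ C, ∀ c' ∈ C,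
      {p : G × G | p.1 ∈ X ∧ p.2 ∈ Y ∧ p.1 * p.2 = c}.ncard =
        {p : G × G | p.1 ∈ X ∧ p.2 ∈ Y ∧ p.1 * p.2 = c'}.ncard) :
    IsSchurRing (T ∪ { B : Set G | ∃ a ∈ I, B = {a} }) := by
  classical
  constructor
  · constructor
    · rintro X (hX | ⟨a, haI, rfl⟩)
      · exact ⟨(hT.1 X hX).1, (hT.1 X hX).2.1⟩
      · exact ⟨Set.singleton_nonempty a, Set.finite_singleton a⟩
    · intro x
      by_cases hxI : x ∈ I
      · refine ⟨{x}, ⟨Or.inr ⟨x, hxI, rfl⟩, rfl⟩, ?_⟩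
        rintro B ⟨(hB | ⟨a, haI, rfl⟩), hxB⟩
        · exact absurd hxI ((hT.1 B hB).2.2 hxB)
        · rw [Set.mem_singleton_iff] at hxB
          subst hxB; rfl
      · obtain ⟨C, ⟨hCT, hxC⟩, huniq⟩ := hT.2 x hxI
        refine ⟨C, ⟨Or.inl hCT, hxC⟩, ?_⟩
        rintro B ⟨(hB | ⟨a, haI, rfl⟩), hxB⟩
        · exact huniq B ⟨hB, hxB⟩
        · rw [Set.mem_singleton_iff] at hxB
          exact absurd (hxB ▸ haI) hxI
  · intro X hX Y hY hXf hYf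
    apply span_of_blockConst I T hT
    intro C hC c hc c' hc'
    have hcI : c ∉ I := (hT.1 C hC).2.2 hc
    have hc'I : c' ∉ I := (hT.1 C hC).2.2 hc'
    rw [mul_coeff, mul_coeff]
    have hXcoe : (hXf.toFinset : Set G) = X := hXf.coe_toFinset
    have hYcoe : (hYf.toFinset : Set G) = Y := hYf.coe_toFinset
    -- helper for singleton cases
    have key : (∀ x ∈ X, ∀ y ∈ Y, x * y ∈ I) → ∀ d ∉ I,
        ((hXf.toFinset ×ˢ hYf.toFinset).filter (fun p => p.1 * p.2 = d)) = ∅ := by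
      intro hid d hdI
      rw [Finset.filter_eq_empty_iff]
      rintro p hp hpd
      rw [Finset.mem_product, Set.Finite.mem_toFinset, Set.Finite.mem_toFinset] at hp
      exact hdI (hpd ▸ hid p.1 hp.1 p.2 hp.2)
    rcases hX with hXT | ⟨a, haI, rfl⟩
    · rcases hY with hYT | ⟨b, hbI, rfl⟩
      · have h := hmult X hXT Y hYT C hC c hc c' hc'
        rw [← hXcoe, ← hYcoe] at h
        rw [ncard_pairs, ncard_pairs] at h
        exact_mod_cast h
      · have hid : ∀ x ∈ X, ∀ y ∈ ({b} : Set G), x * y ∈ I := by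
          intro x _ y hy
          rw [Set.mem_singleton_iff] at hy
          subst hy
          exact (hI y hbI x).2
        rw [key hid c hcI, key hid c' hc'I]
    · have hid : ∀ x ∈ ({a} : Set G), ∀ y ∈ Y, x * y ∈ I := by
        intro x hx y _
        rw [Set.mem_singleton_iff] at hx
        subst hx
        exact (hI x haI y).1
      rw [key hid c hcI, key hid c' hc'I]
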